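/- arXiv:1803.04660 — 2 statements merged into one kernel-verified Lean document; each statement's English description precedes it below -/
import Mathlib

section
/- Let G be a finite connected δ-hyperbolic simple graph. For every two vertices c and v such that v is furthest from c (i.e., d(c,v) = e(c)), one has e(v) ≥ diam(G) − 2δ, and consequently e(v) ≥ 2·rad(G) − 6δ − 1. -/
/-- The eccentricity of a vertex `u`: the maximum shortest-path distance from `u`. -/
noncomputable def graphEcc {V : Type*} [Fintype V] (G : SimpleGraph V) (u : V) : ℕ :=
  Finset.univ.sup (G.dist u)


/-- The radius: the minimum eccentricity. -/
noncomputable def graphRad {V : Type*} [Fintype V] [Nonempty V] (G : SimpleGraph V) : ℕ :=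
  Finset.univ.inf' Finset.univ_nonempty (graphEcc G)

/-- The diameter: the maximum eccentricity. -/
noncomputable def graphDiam {V : Type*} [Fintype V] (G : SimpleGraph V) : ℕ :=
  Finset.univ.sup (graphEcc G)


/-- `G` is `δ`-hyperbolic: for any four vertices, the two larger of the three distance sums
differ by at most `2δ` (four-point condition). -/
def IsHyperbolic {V : Type*} (G : SimpleGraph V) (δ : ℝ) : Prop :=
  ∀ u v x y : V,
    (G.dist u v : ℝ) + (G.dist x y : ℝ) ≤
      max ((G.dist u x : ℝ) + (G.dist v y : ℝ)) ((G.dist u y : ℝ) + (G.dist v x : ℝ)) + 2 * δ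

/-!
Apply the four-point condition to a diametral pair `u, y` together with `c, v`: since `v` is
furthest from `c`, both distance sums on the right are at most `d(c,v) + e(v)`, so
`diam = d(u,y) ≤ e(v) + 2δ`. For the second bound, the four-point condition applied to
`u, y`, a midpoint `m` of a `u`–`y` geodesic and a vertex `w` furthest from `m` gives
`e(m) ≤ ⌈diam / 2⌉ + 2δ`, hence `2 rad ≤ diam + 1 + 4δ`.
-/

open SimpleGraph

theorem SimpleGraph.Connected.exists_dist_eq_of_le_dist {V : Type*} {G : SimpleGraph V}
    (hG : G.Connected) {u y : V} {k : ℕ} (hk : k ≤ G.dist u y) :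
    ∃ m, G.dist u m = k ∧ G.dist m y = G.dist u y - k := by
  obtain ⟨p, hp⟩ := hG.exists_walk_length_eq_dist u y
  have hum : G.dist u (p.getVert k) ≤ k :=
    (dist_le (p.take k)).trans (by simp [Walk.take_length])
  have hmy : G.dist (p.getVert k) y ≤ G.dist u y - k :=
    (dist_le (p.drop k)).trans (by simp [Walk.drop_length, hp])
  have htri : G.dist u y ≤ G.dist u (p.getVert k) + G.dist (p.getVert k) y := hG.dist_triangle
  exact ⟨p.getVert k, by omega, by omega⟩

section Eccentricity

variable {V : Type*} [Fintype V] (G : SimpleGraph V)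

theorem dist_le_graphEcc (u w : V) : G.dist u w ≤ graphEcc G u :=
  Finset.le_sup (Finset.mem_univ w)

theorem exists_dist_eq_graphEcc (u : V) : ∃ w, G.dist u w = graphEcc G u := by
  obtain ⟨w, -, hw⟩ := Finset.exists_mem_eq_sup _ ⟨u, Finset.mem_univ u⟩ (G.dist u)
  exact ⟨w, hw.symm⟩

theorem graphEcc_le_graphDiam (u : V) : graphEcc G u ≤ graphDiam G :=
  Finset.le_sup (Finset.mem_univ u)

theorem dist_le_graphDiam (u w : V) : G.dist u w ≤ graphDiam G :=
  (dist_le_graphEcc G u w).trans (graphEcc_le_graphDiam G u)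

theorem exists_dist_eq_graphDiam [Nonempty V] : ∃ u y, G.dist u y = graphDiam G := by
  obtain ⟨u, -, hu⟩ := Finset.exists_mem_eq_sup _ Finset.univ_nonempty (graphEcc G)
  obtain ⟨y, hy⟩ := exists_dist_eq_graphEcc G u
  exact ⟨u, y, by rw [hy, graphDiam, hu]⟩

theorem graphRad_le_graphEcc [Nonempty V] (u : V) : graphRad G ≤ graphEcc G u :=
  Finset.inf'_le _ (Finset.mem_univ u)

end Eccentricity

namespace IsHyperbolic

variable {V : Type*} [Fintype V] {G : SimpleGraph V} {δ : ℝ}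

theorem dist_le_graphEcc_add (hyp : IsHyperbolic G δ) {c v : V}
    (hv : G.dist c v = graphEcc G c) (u y : V) :
    (G.dist u y : ℝ) ≤ graphEcc G v + 2 * δ := by
  have hfour := hyp u y c v
  have hcu : (G.dist u c : ℝ) ≤ G.dist c v := by
    rw [dist_comm, hv]; exact_mod_cast dist_le_graphEcc G c u
  have hcy : (G.dist y c : ℝ) ≤ G.dist c v := by
    rw [dist_comm, hv]; exact_mod_cast dist_le_graphEcc G c y
  have hvu : (G.dist u v : ℝ) ≤ graphEcc G v := by
    rw [dist_comm]; exact_mod_cast dist_le_graphEcc G v u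
  have hvy : (G.dist y v : ℝ) ≤ graphEcc G v := by
    rw [dist_comm]; exact_mod_cast dist_le_graphEcc G v y
  have hmax := max_le (add_le_add hcu hvy) ((add_le_add hvu hcy).trans_eq (add_comm _ _))
  linarith

theorem graphDiam_le_graphEcc_add (hyp : IsHyperbolic G δ) {c v : V}
    (hv : G.dist c v = graphEcc G c) :
    (graphDiam G : ℝ) ≤ graphEcc G v + 2 * δ := by
  have : Nonempty V := ⟨v⟩
  obtain ⟨u, y, huy⟩ := exists_dist_eq_graphDiam G
  rw [← huy]
  exact hyp.dist_le_graphEcc_add hv u y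

theorem graphEcc_le_add_of_diametral (hyp : IsHyperbolic G δ) {u y m : V}
    (huy : G.dist u y = graphDiam G) {a : ℕ} (hum : G.dist u m ≤ a) (hmy : G.dist m y ≤ a) :
    (graphEcc G m : ℝ) ≤ a + 2 * δ := by
  obtain ⟨w, hw⟩ := exists_dist_eq_graphEcc G m
  have hfour := hyp u y w m
  rw [dist_comm (u := w), hw, dist_comm (u := y) (v := m), huy] at hfour
  have huw : (G.dist u w : ℝ) ≤ graphDiam G := by exact_mod_cast dist_le_graphDiam G u w
  have hyw : (G.dist y w : ℝ) ≤ graphDiam G := by exact_mod_cast dist_le_graphDiam G y w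
  have hum' : (G.dist u m : ℝ) ≤ a := by exact_mod_cast hum
  have hmy' : (G.dist m y : ℝ) ≤ a := by exact_mod_cast hmy
  have hmax := max_le (add_le_add huw hmy') ((add_le_add hum' hyw).trans_eq (add_comm _ _))
  linarith

theorem two_mul_graphRad_le [Nonempty V] (hG : G.Connected) (hyp : IsHyperbolic G δ) :
    2 * (graphRad G : ℝ) ≤ graphDiam G + 1 + 4 * δ := by
  obtain ⟨u, y, huy⟩ := exists_dist_eq_graphDiam G
  set D := graphDiam G
  obtain ⟨m, hum, hmy⟩ := hG.exists_dist_eq_of_le_dist (u := u) (y := y) (k := D / 2) (by omega)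
  have hecc := hyp.graphEcc_le_add_of_diametral huy (m := m) (a := D - D / 2) (by omega) (by omega)
  have hrad : (graphRad G : ℝ) ≤ graphEcc G m := by exact_mod_cast graphRad_le_graphEcc G m
  have hhalf : ((D - D / 2 : ℕ) : ℝ) * 2 ≤ D + 1 := by norm_cast; omega
  linarith

end IsHyperbolic

theorem hyperbolic_furthest_ecc_general {V : Type*} [Fintype V] [Nonempty V] (G : SimpleGraph V)
    (hG : G.Connected) (δ : ℝ) (hyp : IsHyperbolic G δ)
    (c v : V) (hv : G.dist c v = graphEcc G c) :
    (graphEcc G v : ℝ) ≥ (graphDiam G : ℝ) - 2 * δ ∧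
    (graphEcc G v : ℝ) ≥ 2 * (graphRad G : ℝ) - 6 * δ - 1 := by
  have hdiam := hyp.graphDiam_le_graphEcc_add hv
  have hrad := hyp.two_mul_graphRad_le hG
  constructor <;> linarith

theorem hyperbolic_furthest_ecc {V : Type*} [Fintype V] [Nonempty V] (G : SimpleGraph V)
    (hG : G.Connected) (δ : ℝ) (hδ : 0 ≤ δ) (hyp : IsHyperbolic G δ)
    (c v : V) (hv : G.dist c v = graphEcc G c) :
    (graphEcc G v : ℝ) ≥ (graphDiam G : ℝ) - 2 * δ ∧
    (graphEcc G v : ℝ) ≥ 2 * (graphRad G : ℝ) - 6 * δ - 1 :=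
  hyperbolic_furthest_ecc_general G hG δ hyp c v hv
end

section
/- Let G be a finite connected chordal simple graph and let x be a vertex with e(x) = k > rad(G). Then there exists a vertex y with e(y) = k − 1 and d(x,y) ≤ 2. -/
/-- `G` is chordal: it has no induced cycle of length at least 4
(equivalently, every induced cycle of length at least 4 has a chord). -/
def IsChordal {V : Type*} (G : SimpleGraph V) : Prop :=
  ∀ n : ℕ, 4 ≤ n → IsEmpty (SimpleGraph.cycleGraph n ↪g G)


/-!
Let `c` be a center, so `e(c) < e(x) = k`. It suffices to find `y₀` with `d(x, y₀) ≤ 2` and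
`e(y₀) < k`: eccentricity changes by at most one along an edge, so a geodesic from `x` to `y₀`
passes through a vertex of eccentricity exactly `k - 1`.

If `d(x, c) ≤ 2`, take `y₀ = c`. Otherwise let `C` be the component of `c` among the vertices at
distance at least 3 from `x`. The neighbours of `C` outside `C` lie at distance exactly 2 from `x`,
and they form a clique: two non-adjacent ones are joined by an induced path through `C` and by one
through the ball of radius 1 around `x`, and these close up to an induced cycle of length at
least 4. Any such neighbour `y₀` works. A vertex of `C` is reached from `x` through the clique, so
`y₀` is one step closer to it than `x` is; any other vertex `w` reaches `c` through the clique, so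
`d(y₀, w) ≤ d(w, c) ≤ e(c) < k`.
-/

namespace SimpleGraph

variable {V : Type*} {G : SimpleGraph V}

lemma cycleGraph_adj_iff_val {n : ℕ} (hn : 2 ≤ n) {i j : Fin n} :
    (cycleGraph n).Adj i j ↔
      (j.val = i.val + 1 ∨ i.val + 1 = n ∧ j.val = 0) ∨
        (i.val = j.val + 1 ∨ j.val + 1 = n ∧ i.val = 0) := by
  rw [cycleGraph_adj']
  have key : ∀ k l : Fin n, (k - l).val = 1 ↔ k.val = l.val + 1 ∨ l.val + 1 = n ∧ k.val = 0 := by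
    intro k l
    rcases le_or_gt l k with h | h
    · rw [Fin.sub_val_of_le h]; omega
    · rw [Fin.coe_sub_iff_lt.mpr h]; omega
  rw [key, key]
  tauto

theorem _root_.IsChordal.not_isChordless (hch : IsChordal G) {u : V} {p : G.Walk u u}
    (hp : p.IsCycle) (h4 : 4 ≤ p.length) : ¬p.IsChordless := by
  intro hc
  set n := p.length
  have hinj : ∀ i j : Fin n, p.getVert i = p.getVert j → i = j := fun i j h =>
    Fin.ext <| hp.getVert_injOn' (by simp only [Set.mem_ofPred_eq]; omega)
      (by simp only [Set.mem_ofPred_eq]; omega) h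
  have getVert_succ : ∀ i : Fin n, i.val + 1 = n → p.getVert (i + 1) = p.getVert 0 := fun i hi => by
    rw [p.getVert_of_length_le hi.ge, p.getVert_zero]
  have hsucc : ∀ i j : Fin n, p.getVert (i + 1) = p.getVert j →
      j.val = i.val + 1 ∨ i.val + 1 = n ∧ j.val = 0 := by
    intro i j h
    rcases Nat.lt_or_ge (i.val + 1) n with hi | hi
    · exact .inl (congrArg Fin.val (hinj ⟨_, hi⟩ j h)).symm
    · rw [getVert_succ i (by omega)] at h
      exact .inr ⟨by omega, (congrArg Fin.val (hinj ⟨0, by omega⟩ j h)).symm⟩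
  have hadj : ∀ i j : Fin n, G.Adj (p.getVert i) (p.getVert j) ↔ (cycleGraph n).Adj i j := by
    intro i j
    rw [cycleGraph_adj_iff_val (by omega)]
    constructor
    · intro h
      obtain ⟨k, hk, hkij⟩ := (p.mk_mem_edges_iff_exists).1
        (hc.mem_edges (p.getVert_mem_support i) (p.getVert_mem_support j) h)
      rcases Sym2.eq_iff.1 hkij with ⟨h1, h2⟩ | ⟨h1, h2⟩
      · cases hinj ⟨k, hk⟩ i h1
        exact .inl (hsucc _ j h2)
      · cases hinj ⟨k, hk⟩ j h1
        exact .inr (hsucc _ i h2)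
    · rintro ((h | ⟨h1, h2⟩) | (h | ⟨h1, h2⟩))
      · rw [h]; exact p.adj_getVert_succ i.isLt
      · rw [h2, ← getVert_succ i h1]; exact p.adj_getVert_succ i.isLt
      · rw [h]; exact (p.adj_getVert_succ j.isLt).symm
      · rw [h2, ← getVert_succ j h1]; exact (p.adj_getVert_succ j.isLt).symm
  exact (hch n h4).false ⟨⟨fun i => p.getVert i, fun i j h => hinj i j h⟩, hadj _ _⟩

/-- A shortest walk inside `X` is an induced path: any chord or repeated vertex would give a
shorter walk inside `X`. -/
theorem Walk.exists_isPath_isChordless_within {u v : V} {X : Set V} (p : G.Walk u v)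
    (hp : ∀ z ∈ p.support, z ∈ X) :
    ∃ q : G.Walk u v, q.IsPath ∧ q.IsChordless ∧ ∀ z ∈ q.support, z ∈ X := by
  classical
  have hex : ∃ n, ∃ q : G.Walk u v, q.length = n ∧ ∀ z ∈ q.support, z ∈ X := ⟨_, p, rfl, hp⟩
  obtain ⟨q, hlen, hq⟩ := Nat.find_spec hex
  have shortcut : ∀ i j, i ≤ j → j ≤ q.length → ∀ r : G.Walk (q.getVert i) (q.getVert j),
      (∀ z ∈ r.support, z ∈ X) → j ≤ i + r.length := by
    intro i j hij hj r hr
    have := Nat.find_min' hex ⟨(q.take i).append (r.append (q.drop j)), rfl, fun z hz => by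
      simp only [mem_support_append_iff] at hz
      rcases hz with hz | hz | hz
      · exact hq z ((q.isSubwalk_take i).support_subset hz)
      · exact hr z hz
      · exact hq z ((q.isSubwalk_drop j).support_subset hz)⟩
    simp only [length_append, take_length, drop_length] at this
    omega
  have hinj : ∀ i j, i ≤ j → j ≤ q.length → q.getVert i = q.getVert j → i = j := by
    intro i j hij hj h
    have := shortcut i j hij hj (nil.copy rfl h) (by simpa using hq _ (q.getVert_mem_support i))
    simp only [length_copy, length_nil] at this
    omega
  refine ⟨q, (IsPath.getVert_injOn_iff q).1 fun i hi j hj h => ?_, ?_, hq⟩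
  · rcases le_total i j with hij | hij
    · exact hinj i j hij hj h
    · exact (hinj j i hij hi h.symm).symm
  · rw [isChordless_iff_forall_mem_edges]
    intro a b ha hb hab
    obtain ⟨i, rfl, hi⟩ := mem_support_iff_exists_getVert.1 ha
    obtain ⟨j, rfl, hj⟩ := mem_support_iff_exists_getVert.1 hb
    have key : ∀ i j, i ≤ j → j ≤ q.length → G.Adj (q.getVert i) (q.getVert j) →
        s(q.getVert i, q.getVert j) ∈ q.edges := by
      intro i j hij hj h
      have h1 := shortcut i j hij hj h.toWalk (by simp [hq _ (q.getVert_mem_support i),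
        hq _ (q.getVert_mem_support j)])
      have h2 : i ≠ j := by rintro rfl; exact h.ne rfl
      simp only [Adj.length_toWalk] at h1
      rw [mk_mem_edges_iff_exists]
      exact ⟨i, by omega, by rw [show j = i + 1 by omega]⟩
    rcases le_total i j with hij | hij
    · exact key i j hij hj hab
    · rw [Sym2.eq_swap]; exact key j i hij hi hab.symm

section Gluing

variable {y a : V} {S T : Set V} {P Q : G.Walk y a}

lemma Walk.IsPath.isCycle_append_reverse_of_disjoint (hdisj : Disjoint S T) (hP : P.IsPath)
    (hQ : Q.IsPath) (hPS : ∀ z ∈ P.support, z ∈ S ∪ {y, a})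
    (hQT : ∀ z ∈ Q.support, z ∈ T ∪ {y, a}) (h2 : 2 ≤ P.length) :
    (P.append Q.reverse).IsCycle := by
  refine hP.isCycle_append hQ.reverse (fun z hzP hzQ => ?_) (.inl h2)
  have hzy : z ≠ y := by
    rintro rfl
    exact (List.nodup_cons.1 (P.cons_tail_support ▸ hP.support_nodup)).1 hzP
  have hza : z ≠ a := by
    rintro rfl
    exact (List.nodup_cons.1 (Q.reverse.cons_tail_support ▸ hQ.reverse.support_nodup)).1 hzQ
  have hzS := hPS z (List.mem_of_mem_tail hzP)
  have hzT := hQT z (by simpa using List.mem_of_mem_tail hzQ)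
  simp only [Set.mem_union, Set.mem_insert_iff, Set.mem_singleton_iff, hzy, hza,
    or_false] at hzS hzT
  exact Set.disjoint_left.1 hdisj hzS hzT

lemma Walk.IsChordless.append_reverse_of_not_adj (hnadj : ∀ s ∈ S, ∀ t ∈ T, ¬G.Adj s t)
    (hP : P.IsChordless) (hQ : Q.IsChordless) (hPS : ∀ z ∈ P.support, z ∈ S ∪ {y, a})
    (hQT : ∀ z ∈ Q.support, z ∈ T ∪ {y, a}) : (P.append Q.reverse).IsChordless := by
  have mixed : ∀ z ∈ P.support, ∀ w ∈ Q.support, G.Adj z w →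
      s(z, w) ∈ P.edges ∨ s(z, w) ∈ Q.edges := by
    intro z hz w hw h
    rcases hPS z hz with hzS | rfl | rfl
    · rcases hQT w hw with hwT | rfl | rfl
      · exact absurd h (hnadj z hzS w hwT)
      · exact .inl (hP.mem_edges hz P.start_mem_support h)
      · exact .inl (hP.mem_edges hz P.end_mem_support h)
    · exact .inr (hQ.mem_edges Q.start_mem_support hw h)
    · exact .inr (hQ.mem_edges Q.end_mem_support hw h)
  rw [isChordless_iff_forall_mem_edges]
  intro z w hz hw h
  simp only [mem_support_append_iff, support_reverse, List.mem_reverse] at hz hw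
  simp only [edges_append, edges_reverse, List.mem_append, List.mem_reverse]
  rcases hz with hz | hz <;> rcases hw with hw | hw
  · exact .inl (hP.mem_edges hz hw h)
  · exact mixed z hz w hw h
  · rw [Sym2.eq_swap]; exact mixed w hw z hz h.symm
  · exact .inr (hQ.mem_edges hz hw h)

/-- Two induced `y`–`a` paths through separated sets `S` and `T` close up to an induced cycle. -/
theorem _root_.IsChordal.adj_of_walks_separated (hch : IsChordal G) (hne : y ≠ a)
    (hdisj : Disjoint S T) (hnadj : ∀ s ∈ S, ∀ t ∈ T, ¬G.Adj s t)
    (p : G.Walk y a) (hp : ∀ z ∈ p.support, z ∈ S ∪ {y, a})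
    (q : G.Walk y a) (hq : ∀ z ∈ q.support, z ∈ T ∪ {y, a}) : G.Adj y a := by
  by_contra hya
  obtain ⟨P, hPpath, hPc, hPS⟩ := p.exists_isPath_isChordless_within hp
  obtain ⟨Q, hQpath, hQc, hQT⟩ := q.exists_isPath_isChordless_within hq
  have two_le : ∀ r : G.Walk y a, 2 ≤ r.length := fun r => by
    have : r.length ≠ 0 := fun h => hne (Walk.eq_of_length_eq_zero h)
    have : r.length ≠ 1 := fun h => hya (Walk.adj_of_length_eq_one h)
    omega
  refine hch.not_isChordless (hPpath.isCycle_append_reverse_of_disjoint hdisj hQpath hPS hQT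
    (two_le P)) ?_ (hPc.append_reverse_of_not_adj hnadj hQc hPS hQT)
  simp only [Walk.length_append, Walk.length_reverse]
  linarith [two_le P, two_le Q]

end Gluing

section Eccentricity

variable [Fintype V]

lemma dist_le_graphEcc (u v : V) : G.dist u v ≤ graphEcc G u :=
  Finset.le_sup (Finset.mem_univ v)

lemma graphEcc_le_iff {u : V} {m : ℕ} : graphEcc G u ≤ m ↔ ∀ v, G.dist u v ≤ m := by
  simp [graphEcc]

lemma exists_graphEcc_eq_graphRad [Nonempty V] (G : SimpleGraph V) :
    ∃ c, graphEcc G c = graphRad G := by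
  obtain ⟨c, -, hc⟩ := Finset.exists_mem_eq_inf' Finset.univ_nonempty (graphEcc G)
  exact ⟨c, hc.symm⟩

lemma Connected.graphEcc_le_dist_add (hG : G.Connected) (u v : V) :
    graphEcc G u ≤ G.dist u v + graphEcc G v :=
  graphEcc_le_iff.2 fun w => hG.dist_triangle.trans (Nat.add_le_add_left (dist_le_graphEcc v w) _)

/-- Eccentricity is 1-Lipschitz, so along a geodesic it takes every intermediate value. -/
lemma Connected.exists_dist_le_graphEcc_eq (hG : G.Connected) {u v : V} {m : ℕ}
    (hv : graphEcc G v ≤ m) (hu : m ≤ graphEcc G u) :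
    ∃ w, G.dist u w ≤ G.dist u v ∧ graphEcc G w = m := by
  suffices ∀ p : G.Walk u v, ∃ w, G.dist u w ≤ p.length ∧ graphEcc G w = m by
    obtain ⟨p, hp⟩ := hG.exists_walk_length_eq_dist u v
    simpa [hp] using this p
  intro p
  induction p with
  | nil => exact ⟨_, by simp, le_antisymm hv hu⟩
  | @cons u u' v h q ih =>
    rcases hu.eq_or_lt with rfl | hlt
    · exact ⟨u, by simp, rfl⟩
    have hu' := hG.graphEcc_le_dist_add u u'
    rw [dist_eq_one_iff_adj.2 h] at hu'
    obtain ⟨w, hw, rfl⟩ := ih hv (by omega)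
    refine ⟨w, (hG.dist_triangle (v := u')).trans ?_, rfl⟩
    rw [dist_eq_one_iff_adj.2 h, Walk.length_cons]
    omega

end Eccentricity

/-- The component of `c` in the subgraph induced on `X` (empty when `c ∉ X`). -/
def componentIn (G : SimpleGraph V) (X : Set V) (c : V) : Set V :=
  {w | ∃ p : G.Walk c w, ∀ z ∈ p.support, z ∈ X}

section componentIn

variable {X : Set V} {c u v : V}

lemma componentIn_subset : G.componentIn X c ⊆ X := fun _ ⟨p, hp⟩ => hp _ p.end_mem_support

lemma mem_componentIn_self (hc : c ∈ X) : c ∈ G.componentIn X c :=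
  ⟨.nil, by simpa using hc⟩

lemma mem_componentIn_of_adj (hu : u ∈ G.componentIn X c) (h : G.Adj u v) (hv : v ∈ X) :
    v ∈ G.componentIn X c := by
  obtain ⟨p, hp⟩ := hu
  refine ⟨p.concat h, fun z hz => ?_⟩
  rw [Walk.support_concat, List.mem_append, List.mem_singleton] at hz
  exact hz.elim (hp z) (· ▸ hv)

lemma exists_walk_of_mem_componentIn (hu : u ∈ G.componentIn X c) (hv : v ∈ G.componentIn X c) :
    ∃ p : G.Walk u v, ∀ z ∈ p.support, z ∈ X := by
  obtain ⟨p, hp⟩ := hu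
  obtain ⟨q, hq⟩ := hv
  refine ⟨p.reverse.append q, fun z hz => ?_⟩
  rw [Walk.mem_support_append_iff, Walk.support_reverse, List.mem_reverse] at hz
  exact hz.elim (hp z) (hq z)

end componentIn

lemma Connected.exists_adj_notMem_mem (hG : G.Connected) {C : Set V} {s t : V} (p : G.Walk s t)
    (hs : s ∉ C) (ht : t ∈ C) :
    ∃ a ∉ C, ∃ b ∈ C, G.Adj a b ∧ G.dist s a + 1 + G.dist b t ≤ p.length := by
  induction p with
  | nil => exact absurd ht hs
  | @cons s v t h q ih =>
    by_cases hv : v ∈ C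
    · refine ⟨s, hs, v, hv, h, ?_⟩
      have := dist_le q
      simp only [dist_self, Walk.length_cons]
      omega
    · obtain ⟨a, ha, b, hb, hab, hd⟩ := ih hv ht
      refine ⟨a, ha, b, hb, hab, ?_⟩
      have : G.dist s a ≤ G.dist s v + G.dist v a := hG.dist_triangle
      rw [dist_eq_one_iff_adj.2 h] at this
      simp only [Walk.length_cons]
      omega

lemma Connected.exists_adj_adj_of_dist_eq_two (hG : G.Connected) {u v : V} (h : G.dist u v = 2) :
    ∃ w, G.Adj u w ∧ G.Adj w v := by
  obtain ⟨p, hp⟩ := hG.exists_walk_length_eq_dist u v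
  refine ⟨p.getVert 1, by simpa using p.adj_getVert_succ (i := 0) (by omega), ?_⟩
  simpa [show 1 + 1 = p.length by omega] using p.adj_getVert_succ (i := 1) (by omega)

lemma dist_eq_two_of_adj_mem_componentIn (hG : G.Connected) {x c a b : V}
    (ha : a ∉ G.componentIn {z | 3 ≤ G.dist x z} c) (hb : b ∈ G.componentIn {z | 3 ≤ G.dist x z} c)
    (hab : G.Adj a b) : G.dist x a = 2 := by
  have hb3 : 3 ≤ G.dist x b := componentIn_subset (X := {z | 3 ≤ G.dist x z}) hb
  have : G.dist x b ≤ G.dist x a + G.dist a b := hG.dist_triangle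
  rw [dist_eq_one_iff_adj.2 hab] at this
  have : G.dist x a < 3 := not_le.1 fun h => ha (mem_componentIn_of_adj hb hab.symm h)
  omega

lemma eq_or_adj_of_adj_mem_componentIn (hG : G.Connected) (hch : IsChordal G) {x c y a b b' : V}
    (hy : y ∉ G.componentIn {z | 3 ≤ G.dist x z} c) (hb : b ∈ G.componentIn {z | 3 ≤ G.dist x z} c)
    (hyb : G.Adj y b) (ha : a ∉ G.componentIn {z | 3 ≤ G.dist x z} c)
    (hb' : b' ∈ G.componentIn {z | 3 ≤ G.dist x z} c) (hab' : G.Adj a b') : y = a ∨ G.Adj y a := by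
  refine or_iff_not_imp_left.2 fun hne => ?_
  have hdisj : Disjoint {z | 3 ≤ G.dist x z} {z | G.dist x z ≤ 1} :=
    Set.disjoint_left.2 fun z (hs : 3 ≤ _) (ht : _ ≤ 1) => by omega
  have hnadj : ∀ s ∈ {z | 3 ≤ G.dist x z}, ∀ t ∈ {z | G.dist x z ≤ 1}, ¬G.Adj s t := by
    intro s (hs : 3 ≤ _) t (ht : _ ≤ 1) h
    have : G.dist x s ≤ G.dist x t + G.dist t s := hG.dist_triangle
    rw [dist_eq_one_iff_adj.2 h.symm] at this
    omega
  obtain ⟨r, hr⟩ := exists_walk_of_mem_componentIn hb hb'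
  obtain ⟨m, hym, hmx⟩ := hG.exists_adj_adj_of_dist_eq_two
    ((dist_comm).trans (dist_eq_two_of_adj_mem_componentIn hG hy hb hyb))
  obtain ⟨m', hxm', hm'a⟩ := hG.exists_adj_adj_of_dist_eq_two
    (dist_eq_two_of_adj_mem_componentIn hG ha hb' hab')
  refine hch.adj_of_walks_separated hne hdisj hnadj
    (.cons hyb (r.append (.cons hab'.symm .nil))) ?_
    (.cons hym (.cons hmx (.cons hxm' (.cons hm'a .nil)))) ?_
  · intro z hz
    simp only [Walk.support_cons, Walk.support_append, Walk.support_nil, List.mem_cons,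
      List.tail_cons, List.mem_append] at hz
    rcases hz with rfl | hz | rfl | hz
    · simp
    · exact .inl (hr z hz)
    · simp
    · simp at hz
  · intro z hz
    simp only [Walk.support_cons, Walk.support_nil, List.mem_cons, List.not_mem_nil, or_false] at hz
    rcases hz with rfl | rfl | rfl | rfl | rfl
    · simp
    · exact .inl (dist_eq_one_iff_adj.2 hmx.symm).le
    · exact .inl (by simp)
    · exact .inl (dist_eq_one_iff_adj.2 hxm').le
    · simp

theorem _root_.IsChordal.exists_dist_le_two_graphEcc_lt [Fintype V]
    (hch : IsChordal G) (hG : G.Connected) {x c : V} (hc : graphEcc G c < graphEcc G x) :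
    ∃ y, G.dist x y ≤ 2 ∧ graphEcc G y < graphEcc G x := by
  by_cases hxc : G.dist x c ≤ 2
  · exact ⟨c, hxc, hc⟩
  set C := G.componentIn {z | 3 ≤ G.dist x z} c
  have hcC : c ∈ C := mem_componentIn_self (by simp only [Set.mem_ofPred_eq]; omega)
  have hxC : x ∉ C := fun h => by simpa using componentIn_subset (X := {z | 3 ≤ G.dist x z}) h
  obtain ⟨y, hyC, b, hbC, hyb, -⟩ := hG.exists_adj_notMem_mem (hG.preconnected x c).some hxC hcC
  have near : ∀ a ∉ C, ∀ b' ∈ C, G.Adj a b' → G.dist y a ≤ 1 := fun a ha b' hb' hab' => by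
    rcases eq_or_adj_of_adj_mem_componentIn hG hch hyC hbC hyb ha hb' hab' with rfl | h
    · simp
    · exact (dist_eq_one_iff_adj.2 h).le
  refine ⟨y, (dist_eq_two_of_adj_mem_componentIn hG hyC hbC hyb).le, ?_⟩
  suffices ∀ w, G.dist y w + 1 ≤ graphEcc G x by
    have := graphEcc_le_iff.2 fun w => Nat.le_sub_one_of_lt (this w)
    omega
  intro w
  have hxw := dist_le_graphEcc (G := G) x w
  have hcw := dist_le_graphEcc (G := G) c w
  by_cases hw : w ∈ C
  · obtain ⟨p, hp⟩ := hG.exists_walk_length_eq_dist x w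
    obtain ⟨a, ha, b', hb', hab', hd⟩ := hG.exists_adj_notMem_mem p hxC hw
    have := near a ha b' hb' hab'
    have hya : G.dist y w ≤ G.dist y a + G.dist a w := hG.dist_triangle
    have hab : G.dist a w ≤ G.dist a b' + G.dist b' w := hG.dist_triangle
    rw [dist_eq_one_iff_adj.2 hab'] at hab
    rw [dist_eq_two_of_adj_mem_componentIn hG ha hb' hab'] at hd
    omega
  · obtain ⟨p, hp⟩ := hG.exists_walk_length_eq_dist w c
    obtain ⟨a, ha, b', hb', hab', hd⟩ := hG.exists_adj_notMem_mem p hw hcC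
    have := near a ha b' hb' hab'
    have hya : G.dist y w ≤ G.dist y a + G.dist a w := hG.dist_triangle
    rw [SimpleGraph.dist_comm (u := a)] at hya
    rw [SimpleGraph.dist_comm] at hp
    omega

end SimpleGraph

theorem chordal_ecc_decrease_within_two {V : Type*} [Fintype V] [Nonempty V]
    (G : SimpleGraph V) (hG : G.Connected) (hchordal : IsChordal G)
    (x : V) (k : ℕ) (hk : graphEcc G x = k) (hgt : k > graphRad G) :
    ∃ y : V, graphEcc G y = k - 1 ∧ G.dist x y ≤ 2 := by
  obtain ⟨c, hc⟩ := G.exists_graphEcc_eq_graphRad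
  obtain ⟨y₀, hxy₀, hy₀⟩ := hchordal.exists_dist_le_two_graphEcc_lt hG (x := x) (c := c) (by omega)
  obtain ⟨y, hxy, hy⟩ := hG.exists_dist_le_graphEcc_eq (m := k - 1) (u := x) (v := y₀)
    (by omega) (by omega)
  exact ⟨y, hy, hxy.trans hxy₀⟩
end
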